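/- arXiv:1705.03553 — 6 statements merged into one kernel-verified Lean document; each statement's English description precedes it below -/
import Mathlib

section
/- Let C be a category and Σ a class of morphisms of C that admits a left calculus of fractions. If every morphism in Σ is a monomorphism, then the localization functor L : C → C[Σ⁻¹] is faithful. -/
open CategoryTheory

/-- If `Σ` admits a left calculus of fractions and every morphism in `Σ` is a
monomorphism, then the localization functor `L : C → C[Σ⁻¹]` is faithful. -/
theorem stmt_0 {C : Type*} [Category C] (W : MorphismProperty C)
    [W.HasLeftCalculusOfFractions]
    (h : ∀ ⦃x y : C⦄ (f : x ⟶ y), W f → Mono f) :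
    W.Q.Faithful := by
  refine ⟨fun {X Y} f g hfg => ?_⟩
  rw [MorphismProperty.map_eq_iff_postcomp W.Q W] at hfg
  obtain ⟨Z, s, hs, fac⟩ := hfg
  have := h s hs
  exact (cancel_mono s).1 fac
end

section
/- Let P = (P₀, P₁, P₂) be a presentation of a category and Σ ⊆ P₁. Then the category presented by P' = (P₀, P₁ ⊎ {f̄ : y → x | f : x → y ∈ Σ}, P₂ ⊎ {f̄ ∘ f = id, f ∘ f̄ = id | f ∈ Σ}) is a localization of the presented category ⟦P⟧ by Σ; i.e., it satisfies the universal property of the localization ⟦P⟧[Σ⁻¹]. -/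
open CategoryTheory Quiver

section

variable (V : Type) [Quiver.{1} V]

/-- The vertices of the presentation `P'` obtained by adding a formal inverse
`f̄ : y → x` for each generator `f : x → y` of `Σ`. -/
def LocV (_T : ∀ ⦃x y : V⦄, (x ⟶ y) → Prop) : Type := V

variable (T : ∀ ⦃x y : V⦄, (x ⟶ y) → Prop)

instance : Quiver.{1} (LocV V T) :=
  ⟨fun x y => (Quiver.Hom (V := V) x y) ⊕ {f : Quiver.Hom (V := V) y x // T f}⟩

/-- The inclusion of generators of `P` into those of `P'`. -/
def ι : Prefunctor V (LocV V T) where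
  obj x := x
  map f := Sum.inl f

/-- The induced functor on path categories. -/
def embed : Paths V ⥤ Paths (LocV V T) :=
  Paths.lift ((ι V T).comp (Paths.of (LocV V T)))

variable (R : HomRel (Paths V))

/-- The relations of `P'`: the relations of `P`, together with the relations
`f̄ ∘ f = id` and `f ∘ f̄ = id` for each `f ∈ Σ`. -/
inductive LocRel : ∀ ⦃X Y : Paths (LocV V T)⦄, (X ⟶ Y) → (X ⟶ Y) → Prop
  | base ⦃X Y : Paths V⦄ (p q : X ⟶ Y) : R p q →
      LocRel ((embed V T).map p) ((embed V T).map q)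
  | inv_comp {x y : V} (f : Quiver.Hom (V := V) x y) (hf : T f) :
      LocRel ((Hom.toPath (V := LocV V T) (Sum.inl f)).comp
          (Hom.toPath (V := LocV V T) (Sum.inr ⟨f, hf⟩)))
        (Path.nil)
  | comp_inv {x y : V} (f : Quiver.Hom (V := V) x y) (hf : T f) :
      LocRel ((Hom.toPath (V := LocV V T) (Sum.inr ⟨f, hf⟩)).comp
          (Hom.toPath (V := LocV V T) (Sum.inl f)))
        (Path.nil)

instance : Category (CategoryTheory.Quotient (LocRel V T R)) :=
  CategoryTheory.Quotient.category _

/-- The set of morphisms of the presented category `⟦P⟧` corresponding to the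
generators in `Σ`. -/
def genProp : MorphismProperty (CategoryTheory.Quotient R) :=
  fun a b u => ∃ g : Quiver.Hom (V := V) (show V from a.as) (show V from b.as),
    T g ∧ u = (CategoryTheory.Quotient.functor R).map (Hom.toPath g)

end

namespace Stmt7Aux

variable (V : Type) [Quiver.{1} V] (T : ∀ ⦃x y : V⦄, (x ⟶ y) → Prop) (R : HomRel (Paths V))

lemma embed_toPath {x y : V} (f : x ⟶ y) :
    (embed V T).map f.toPath = Hom.toPath (V := LocV V T) (Sum.inl f) := by
  simp [embed, Paths.lift_toPath]
  rfl

def L0 : CategoryTheory.Quotient R ⥤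
    CategoryTheory.Quotient (LocRel V T R : HomRel (Paths (LocV V T))) :=
  CategoryTheory.Quotient.lift R (embed V T ⋙ CategoryTheory.Quotient.functor _)
    (fun _ _ p q h => CategoryTheory.Quotient.sound _ (LocRel.base p q h))

lemma fac0 : CategoryTheory.Quotient.functor R ⋙ L0 V T R =
    embed V T ⋙ CategoryTheory.Quotient.functor _ :=
  CategoryTheory.Quotient.lift_spec _ _ _

lemma gen_hom_inv {x y : V} (f : Quiver.Hom (V := V) x y) (hf : T f) :
    (CategoryTheory.Quotient.functor (LocRel V T R)).map
        (Hom.toPath (V := LocV V T) (Sum.inl f)) ≫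
      (CategoryTheory.Quotient.functor (LocRel V T R)).map
        (Hom.toPath (V := LocV V T) (Sum.inr ⟨f, hf⟩)) = 𝟙 _ := by
  erw [← Functor.map_comp]
  exact CategoryTheory.Quotient.sound _ (LocRel.inv_comp f hf)

lemma gen_inv_hom {x y : V} (f : Quiver.Hom (V := V) x y) (hf : T f) :
    (CategoryTheory.Quotient.functor (LocRel V T R)).map
        (Hom.toPath (V := LocV V T) (Sum.inr ⟨f, hf⟩)) ≫
      (CategoryTheory.Quotient.functor (LocRel V T R)).map
        (Hom.toPath (V := LocV V T) (Sum.inl f)) = 𝟙 _ := by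
  erw [← Functor.map_comp]
  exact CategoryTheory.Quotient.sound _ (LocRel.comp_inv f hf)

section Lift

variable {E : Type*} [Category E] (F : CategoryTheory.Quotient R ⥤ E)
  (hF : (genProp V T R).IsInvertedBy F)

noncomputable def liftPre : Prefunctor (LocV V T) E where
  obj x := F.obj ⟨x⟩
  map {x y} g :=
    Sum.rec (fun f => F.map ((CategoryTheory.Quotient.functor R).map f.toPath))
      (fun f =>
        have : IsIso (F.map ((CategoryTheory.Quotient.functor R).map f.1.toPath)) :=
          hF _ ⟨f.1, f.2, rfl⟩
        inv (F.map ((CategoryTheory.Quotient.functor R).map f.1.toPath))) g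

noncomputable def liftP : Paths (LocV V T) ⥤ E := Paths.lift (liftPre V T R F hF)

lemma comm : embed V T ⋙ liftP V T R F hF = CategoryTheory.Quotient.functor R ⋙ F := by
  refine Paths.ext_functor rfl ?_
  intro a b e
  show (liftP V T R F hF).map ((embed V T).map e.toPath) =
    𝟙 _ ≫ F.map ((CategoryTheory.Quotient.functor R).map e.toPath) ≫ 𝟙 _
  rw [Category.id_comp, Category.comp_id]
  erw [Paths.lift_toPath]
  rfl

noncomputable def G : CategoryTheory.Quotient (LocRel V T R : HomRel (Paths (LocV V T))) ⥤ E :=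
  CategoryTheory.Quotient.lift _ (liftP V T R F hF) (by
    rintro x y p q (⟨p, q, h⟩ | ⟨f, hf⟩ | ⟨f, hf⟩)
    · have h1 := Functor.congr_hom (comm V T R F hF) p
      have h2 := Functor.congr_hom (comm V T R F hF) q
      simp only [Functor.comp_map] at h1 h2
      rw [h1, h2, CategoryTheory.Quotient.sound R h]
    · show (liftP V T R F hF).map
        (Hom.toPath (V := LocV V T) (Sum.inl f) ≫ Hom.toPath (V := LocV V T) (Sum.inr ⟨f, hf⟩)) = _
      have : IsIso (F.map ((CategoryTheory.Quotient.functor R).map f.toPath)) :=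
        hF _ ⟨f, hf, rfl⟩
      erw [Functor.map_comp]
      erw [Paths.lift_toPath, Paths.lift_toPath]
      exact IsIso.hom_inv_id (F.map ((CategoryTheory.Quotient.functor R).map f.toPath))
    · show (liftP V T R F hF).map
        (Hom.toPath (V := LocV V T) (Sum.inr ⟨f, hf⟩) ≫ Hom.toPath (V := LocV V T) (Sum.inl f)) = _
      have : IsIso (F.map ((CategoryTheory.Quotient.functor R).map f.toPath)) :=
        hF _ ⟨f, hf, rfl⟩
      erw [Functor.map_comp]
      erw [Paths.lift_toPath, Paths.lift_toPath]
      exact IsIso.inv_hom_id (F.map ((CategoryTheory.Quotient.functor R).map f.toPath)))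

end Lift


lemma key_map {x y : V} (f : Quiver.Hom (V := V) x y) :
    (L0 V T R).map ((CategoryTheory.Quotient.functor R).map f.toPath) =
      (CategoryTheory.Quotient.functor (LocRel V T R)).map
        (Hom.toPath (V := LocV V T) (Sum.inl f)) := rfl

lemma inverts : (genProp V T R).IsInvertedBy (L0 V T R) := by
  rintro a b u ⟨g, hg, rfl⟩
  rw [key_map]
  exact ⟨⟨(CategoryTheory.Quotient.functor (LocRel V T R)).map
      (Hom.toPath (V := LocV V T) (Sum.inr ⟨g, hg⟩)),
    gen_hom_inv V T R g hg, gen_inv_hom V T R g hg⟩⟩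

section Lift2

variable {E : Type*} [Category E] (F : CategoryTheory.Quotient R ⥤ E)
  (hF : (genProp V T R).IsInvertedBy F)

lemma fac : L0 V T R ⋙ G V T R F hF = F := by
  apply CategoryTheory.Quotient.lift_unique' R
  calc CategoryTheory.Quotient.functor R ⋙ L0 V T R ⋙ G V T R F hF
      = (CategoryTheory.Quotient.functor R ⋙ L0 V T R) ⋙ G V T R F hF := rfl
    _ = (embed V T ⋙ CategoryTheory.Quotient.functor _) ⋙ G V T R F hF := by rw [fac0]
    _ = embed V T ⋙ (CategoryTheory.Quotient.functor _ ⋙ G V T R F hF) := rfl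
    _ = embed V T ⋙ liftP V T R F hF :=
        congrArg (fun Φ => embed V T ⋙ Φ)
          (CategoryTheory.Quotient.lift_spec (LocRel V T R) (liftP V T R F hF) _)
    _ = CategoryTheory.Quotient.functor R ⋙ F := comm V T R F hF

lemma uniq (G₁ G₂ : CategoryTheory.Quotient (LocRel V T R : HomRel (Paths (LocV V T))) ⥤ E)
    (h : L0 V T R ⋙ G₁ = L0 V T R ⋙ G₂) : G₁ = G₂ := by
  apply CategoryTheory.Quotient.lift_unique' (LocRel V T R)
  have hobj : ∀ x : LocV V T,
      G₁.obj ⟨(x : Paths (LocV V T))⟩ = G₂.obj ⟨(x : Paths (LocV V T))⟩ := fun x =>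
    Functor.congr_obj h ⟨(x : Paths V)⟩
  have hinl : ∀ (a b : V) (f : Quiver.Hom (V := V) a b),
      G₁.map ((CategoryTheory.Quotient.functor (LocRel V T R)).map
          (Hom.toPath (V := LocV V T) (Sum.inl f))) =
        eqToHom (hobj a) ≫ G₂.map ((CategoryTheory.Quotient.functor (LocRel V T R)).map
          (Hom.toPath (V := LocV V T) (Sum.inl f))) ≫ eqToHom (hobj b).symm := by
    intro a b f
    have := Functor.congr_hom h ((CategoryTheory.Quotient.functor R).map f.toPath)
    simp only [Functor.comp_map, key_map] at this
    exact this
  refine Paths.ext_functor (funext fun x => hobj x) ?_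
  intro a b e
  change (Quiver.Hom (V := V) a b) ⊕ {f : Quiver.Hom (V := V) b a // T f} at e
  cases e with
  | inl f => exact hinl a b f
  | inr f =>
    obtain ⟨f, hf⟩ := f
    set A := (CategoryTheory.Quotient.functor (LocRel V T R)).map
        (Hom.toPath (V := LocV V T) (Sum.inl f)) with hA
    set B := (CategoryTheory.Quotient.functor (LocRel V T R)).map
        (Hom.toPath (V := LocV V T) (Sum.inr ⟨f, hf⟩)) with hB
    have hAB : A ≫ B = 𝟙 _ := gen_hom_inv V T R f hf
    have hBA : B ≫ A = 𝟙 _ := gen_inv_hom V T R f hf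
    have h1 : G₁.map A = eqToHom (hobj b) ≫ G₂.map A ≫ eqToHom (hobj a).symm := hinl b a f
    have e2 : G₁.map A ≫ (eqToHom (hobj a) ≫ G₂.map B ≫ eqToHom (hobj b).symm) = 𝟙 _ := by
      rw [h1]
      simp only [Category.assoc, eqToHom_trans_assoc, eqToHom_refl, Category.id_comp]
      rw [← Functor.map_comp_assoc, hAB]
      show eqToHom _ ≫ G₂.map (𝟙 _) ≫ eqToHom _ = _
      rw [CategoryTheory.Functor.map_id]
      simp
    calc G₁.map B = (G₁.map B ≫ G₁.map A) ≫ (eqToHom (hobj a) ≫ G₂.map B ≫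
            eqToHom (hobj b).symm) := by
          rw [Category.assoc, e2, Category.comp_id]
      _ = eqToHom (hobj a) ≫ G₂.map B ≫ eqToHom (hobj b).symm := by
          rw [← Functor.map_comp, hBA]
          show G₁.map (𝟙 _) ≫ _ = _
          rw [CategoryTheory.Functor.map_id]
          simp

end Lift2

noncomputable def sup (E : Type*) [Category E] :
    Localization.StrictUniversalPropertyFixedTarget (L0 V T R) (genProp V T R) E where
  inverts := inverts V T R
  lift F hF := G V T R F hF
  fac F hF := fac V T R F hF
  uniq G₁ G₂ h := uniq V T R G₁ G₂ h

end Stmt7Aux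

/-- The category presented by `P' = (P₀, P₁ ⊎ Σ̄, P₂ ⊎ {f̄∘f = id, f∘f̄ = id})` is a
localization of the category `⟦P⟧` presented by `P` at the morphisms of `Σ`:
there is a canonical functor `L`, compatible with the inclusion of generators,
which satisfies the universal property of the localization `⟦P⟧[Σ⁻¹]`. -/
theorem stmt_7 (V : Type) [Quiver.{1} V] (T : ∀ ⦃x y : V⦄, (x ⟶ y) → Prop)
    (R : HomRel (Paths V)) :
    ∃ L : CategoryTheory.Quotient R ⥤
        CategoryTheory.Quotient (LocRel V T R : HomRel (Paths (LocV V T))),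
      CategoryTheory.Quotient.functor R ⋙ L =
        embed V T ⋙ CategoryTheory.Quotient.functor _ ∧
      L.IsLocalization (genProp V T R) := by
  exact ⟨Stmt7Aux.L0 V T R, Stmt7Aux.fac0 V T R,
    CategoryTheory.Functor.IsLocalization.mk' _ _ (Stmt7Aux.sup V T R _) (Stmt7Aux.sup V T R _)⟩
end

section
/- Let P = (P₀, P₁, P₂) be a presentation of a category and P̃₁ ⊆ P₁ a set of equational generators. Then the category ⟦P⟧/P̃₁ obtained by quotienting the presented category ⟦P⟧ by P̃₁ is isomorphic to the category presented by the quotient presentation P/P̃₁, whose objects are equivalence classes of P₀ under the equivalence generated by {x ∼ y | some f : x → y ∈ P̃₁}, whose morphism generators are those of P₁ (with sources and targets taken to equivalence classes), and whose relations are those of P₂ together with a relation f = id for each f ∈ P̃₁. -/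
open CategoryTheory Quiver

section

variable (V : Type) [Quiver.{1} V]

/-- The object generators of the quotient presentation `P/P̃₁`: equivalence
classes of object generators of `P` under the relation generated by
`x ∼ y` whenever there is an equational generator `f : x → y`. -/
def QObj (_T : ∀ ⦃x y : V⦄, (x ⟶ y) → Prop) : Type :=
  Quot (fun x y : V => ∃ f : Quiver.Hom (V := V) x y, _T f)

variable (T : ∀ ⦃x y : V⦄, (x ⟶ y) → Prop)

/-- The morphism generators of `P/P̃₁` are those of `P`, with sources and
targets taken to equivalence classes. -/
instance : Quiver.{1} (QObj V T) :=
  ⟨fun c c' => { e : Σ (x : V) (y : V), Quiver.Hom (V := V) x y //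
      Quot.mk _ e.1 = c ∧ Quot.mk _ e.2.1 = c' }⟩

/-- The projection of generators of `P` onto those of `P/P̃₁`. -/
def π : Prefunctor V (QObj V T) where
  obj x := Quot.mk _ x
  map {x y} f := ⟨⟨x, y, f⟩, rfl, rfl⟩

/-- The induced functor on path categories. -/
def πP : Paths V ⥤ Paths (QObj V T) :=
  Paths.lift ((π V T).comp (Paths.of (QObj V T)))

variable (R : HomRel (Paths V))

/-- The relations of `P/P̃₁`: those of `P₂`, together with a relation `f = id`
for each equational generator `f ∈ P̃₁`. -/
inductive QRel : HomRel (Paths (QObj V T))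
  | base ⦃X Y : Paths V⦄ (p q : X ⟶ Y) : R p q →
      QRel ((πP V T).map p) ((πP V T).map q)
  | collapse {x y : V} (f : Quiver.Hom (V := V) x y) (hf : T f) :
      QRel (Hom.toPath ((π V T).map f))
        (eqToHom (X := ((Paths.of (QObj V T)).obj ((π V T).obj x)))
          (Y := ((Paths.of (QObj V T)).obj ((π V T).obj y)))
          (congrArg (Paths.of (QObj V T)).obj (Quot.sound ⟨f, hf⟩)))

end


section
variable (V : Type) [Quiver.{1} V] (T : ∀ ⦃x y : V⦄, (x ⟶ y) → Prop)
  (R : HomRel (Paths V))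

-- auxiliary: K
def Kfun : CategoryTheory.Quotient R ⥤
    CategoryTheory.Quotient (QRel V T R : HomRel (Paths (QObj V T))) :=
  CategoryTheory.Quotient.lift R (πP V T ⋙ CategoryTheory.Quotient.functor _)
    (fun _ _ p q h => CategoryTheory.Quotient.sound _ (QRel.base p q h))

lemma πP_toPath {x y : V} (f : x ⟶ y) :
    (πP V T).map f.toPath = Hom.toPath ((π V T).map f) := rfl

section Univ
variable {E : Type} [Category.{0} E] (G : CategoryTheory.Quotient R ⥤ E)
  (hG : ∀ ⦃x y : CategoryTheory.Quotient R⦄ (f : x ⟶ y), genProp V T R f →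
      ∃ e : G.obj x = G.obj y, G.map f = eqToHom e)

def oFun : QObj V T → E :=
  Quot.lift (fun x => G.obj ((CategoryTheory.Quotient.functor R).obj x))
    (fun x y h => by
      obtain ⟨f, hf⟩ := h
      exact (hG ((CategoryTheory.Quotient.functor R).map f.toPath) ⟨f, hf, rfl⟩).choose)

def φFun : Prefunctor (QObj V T) E where
  obj := oFun V T R G hG
  map {c c'} e :=
    eqToHom (congrArg (oFun V T R G hG) e.2.1.symm) ≫
      (show oFun V T R G hG (Quot.mk _ e.1.1) ⟶ oFun V T R G hG (Quot.mk _ e.1.2.1) from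
        G.map ((CategoryTheory.Quotient.functor R).map (Hom.toPath e.1.2.2))) ≫
      eqToHom (congrArg (oFun V T R G hG) e.2.2)

def ΦFun : Paths (QObj V T) ⥤ E := Paths.lift (φFun V T R G hG)

lemma Φ_gen {x y : V} (f : x ⟶ y) :
    (ΦFun V T R G hG).map (Hom.toPath ((π V T).map f)) =
      G.map ((CategoryTheory.Quotient.functor R).map f.toPath) := by
  dsimp only [ΦFun]
  rw [Paths.lift_toPath]
  simp [φFun, π]
  exact Category.comp_id _

lemma Φ_πP {X Y : Paths V} (p : X ⟶ Y) :
    (ΦFun V T R G hG).map ((πP V T).map p) =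
      G.map ((CategoryTheory.Quotient.functor R).map p) := by
  induction p using Paths.induction_fixed_source with
  | id =>
      show 𝟙 (oFun V T R G hG (Quot.mk _ X)) =
        G.map (𝟙 ((CategoryTheory.Quotient.functor R).obj ((Paths.of V).obj X)))
      rw [G.map_id]
      rfl
  | comp p q ih =>
      rw [(πP V T).map_comp, (ΦFun V T R G hG).map_comp, ih,
        (CategoryTheory.Quotient.functor R).map_comp, G.map_comp]
      congr 1
      exact Φ_gen V T R G hG q

lemma Φ_resp : ∀ (X Y : Paths (QObj V T)) (p q : X ⟶ Y),
    (QRel V T R : HomRel (Paths (QObj V T))) p q →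
      (ΦFun V T R G hG).map p = (ΦFun V T R G hG).map q := by
  intro X Y p q h
  induction h with
  | base p q h =>
      rw [Φ_πP, Φ_πP, CategoryTheory.Quotient.sound R h]
  | collapse f hf =>
      rw [Φ_gen]
      rw [(hG ((CategoryTheory.Quotient.functor R).map (Hom.toPath f)) ⟨f, hf, rfl⟩).choose_spec]
      erw [eqToHom_map]
      rfl

def Hfun : CategoryTheory.Quotient (QRel V T R : HomRel (Paths (QObj V T))) ⥤ E :=
  CategoryTheory.Quotient.lift _ (ΦFun V T R G hG) (Φ_resp V T R G hG)

end Univ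

end

/-- `F : C ⥤ D` is a quotient of `C` by `W`: it sends the morphisms of `W` to
identities and is universal with this property. -/
structure IsQuotient {C : Type*} [Category C] {D : Type*} [Category D]
    (W : MorphismProperty C) (F : C ⥤ D) : Prop where
  maps_to_id : ∀ ⦃x y : C⦄ (f : x ⟶ y), W f →
    ∃ e : F.obj x = F.obj y, F.map f = eqToHom e
  universal : ∀ {E : Type} [Category.{0} E] (G : C ⥤ E),
    (∀ ⦃x y : C⦄ (f : x ⟶ y), W f →
      ∃ e : G.obj x = G.obj y, G.map f = eqToHom e) →
    ∃! H : D ⥤ E, F ⋙ H = G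

/-- The quotient `⟦P⟧/P̃₁` of the presented category by the equational generators
is (canonically) isomorphic to the category presented by the quotient
presentation `P/P̃₁`: the category presented by `P/P̃₁`, together with the
canonical functor from `⟦P⟧`, satisfies the universal property of the quotient. -/
theorem stmt_8 (V : Type) [Quiver.{1} V] (T : ∀ ⦃x y : V⦄, (x ⟶ y) → Prop)
    (R : HomRel (Paths V)) :
    ∃ K : CategoryTheory.Quotient R ⥤
        CategoryTheory.Quotient (QRel V T R : HomRel (Paths (QObj V T))),
      CategoryTheory.Quotient.functor R ⋙ K =
        πP V T ⋙ CategoryTheory.Quotient.functor _ ∧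
      IsQuotient (genProp V T R) K := by
  refine ⟨Kfun V T R, CategoryTheory.Quotient.lift_spec _ _ _, ?_, ?_⟩
  · -- maps_to_id
    rintro ⟨x⟩ ⟨y⟩ u ⟨g, hg, rfl⟩
    refine ⟨congrArg (fun c : QObj V T =>
        (⟨c⟩ : CategoryTheory.Quotient (QRel V T R : HomRel (Paths (QObj V T)))))
        (Quot.sound ⟨g, hg⟩), ?_⟩
    have hs := CategoryTheory.Quotient.sound (QRel V T R : HomRel (Paths (QObj V T)))
      (QRel.collapse g hg)
    show (Kfun V T R).map ((CategoryTheory.Quotient.functor R).map (Quiver.Hom.toPath g)) = _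
    unfold Kfun
    rw [CategoryTheory.Quotient.lift_map_functor_map]
    show (CategoryTheory.Quotient.functor
        (QRel V T R : HomRel (Paths (QObj V T)))).map (Hom.toPath ((π V T).map g)) = _
    rw [hs]
    exact eqToHom_map _ _
  · -- universal
    intro E _ G hG
    refine ⟨Hfun V T R G hG, ?_, ?_⟩
    · -- existence
      apply CategoryTheory.Quotient.lift_unique' R
      have h1 : CategoryTheory.Quotient.functor R ⋙ Kfun V T R =
          πP V T ⋙ CategoryTheory.Quotient.functor _ :=
        CategoryTheory.Quotient.lift_spec _ _ _
      have h2 : CategoryTheory.Quotient.functor _ ⋙ Hfun V T R G hG = ΦFun V T R G hG :=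
        CategoryTheory.Quotient.lift_spec _ _ _
      rw [← Functor.assoc, h1, Functor.assoc, h2]
      refine Paths.ext_functor rfl ?_
      intro a b e
      erw [eqToHom_refl, eqToHom_refl, Category.id_comp, Category.comp_id]
      exact Φ_πP V T R G hG (Quiver.Hom.toPath e)
    · -- uniqueness
      intro H' hH'
      apply CategoryTheory.Quotient.lift_unique' (QRel V T R : HomRel (Paths (QObj V T)))
      have h2 : CategoryTheory.Quotient.functor _ ⋙ Hfun V T R G hG = ΦFun V T R G hG :=
        CategoryTheory.Quotient.lift_spec _ _ _
      have hobj : (CategoryTheory.Quotient.functor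
          (QRel V T R : HomRel (Paths (QObj V T))) ⋙ H').obj =
          (CategoryTheory.Quotient.functor
          (QRel V T R : HomRel (Paths (QObj V T))) ⋙ Hfun V T R G hG).obj := by
        funext c
        induction c using Quot.ind with
        | _ x => exact Functor.congr_obj hH' ⟨x⟩
      refine Paths.ext_functor hobj ?_
      rintro c c' ⟨⟨x, y, f⟩, hx, hy⟩
      subst hx
      subst hy
      have hcong := Functor.congr_hom hH'
        ((CategoryTheory.Quotient.functor R).map (Quiver.Hom.toPath f))
      show (Kfun V T R ⋙ H').map
        ((CategoryTheory.Quotient.functor R).map (Quiver.Hom.toPath f)) = _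
      rw [hcong]
      have h3 : (CategoryTheory.Quotient.functor
          (QRel V T R : HomRel (Paths (QObj V T))) ⋙ Hfun V T R G hG).map
            (Hom.toPath ((π V T).map f)) =
          G.map ((CategoryTheory.Quotient.functor R).map (Quiver.Hom.toPath f)) :=
        (CategoryTheory.Quotient.lift_map_functor_map _ (ΦFun V T R G hG)
          (Φ_resp V T R G hG) (Hom.toPath ((π V T).map f))).trans (Φ_gen V T R G hG f)
      show _ = eqToHom (congr_fun hobj (Quot.mk _ x)) ≫
          (CategoryTheory.Quotient.functor
            (QRel V T R : HomRel (Paths (QObj V T))) ⋙ Hfun V T R G hG).map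
              (Hom.toPath ((π V T).map f)) ≫
          eqToHom (congr_fun hobj.symm (Quot.mk _ y))
      erw [h3]
      rfl
end

section
/- In the proof of the equivalence between the category of normal forms and the localization: if Σ is a left calculus of fractions on a category C and ŷ is an object admitting no nonidentity morphism of Σ out of it (a 'normal form'), then every fraction (f, u) : x → ŷ in the category of fractions with u ∈ Σ satisfies u = id, and two fractions (f₁, id), (f₂, id) : x → ŷ are equal in the category of fractions if and only if f₁ = f₂ in C. -/
open CategoryTheory

/-- If `Σ` is a left calculus of fractions and `ŷ` is a normal form (every
morphism of `Σ` with source `ŷ` is an identity), then every left fraction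
`(f, u) : x → ŷ` has `u = id`, and two fractions `(f₁, id)`, `(f₂, id)` are
equivalent iff `f₁ = f₂` in `C`. -/
theorem stmt_15 {C : Type*} [Category C] (W : MorphismProperty C)
    [W.HasLeftCalculusOfFractions] (yhat : C)
    (hnf : ∀ ⦃z : C⦄ (u : yhat ⟶ z), W u → ∃ e : yhat = z, u = eqToHom e) :
    (∀ (x : C) (φ : W.LeftFraction x yhat),
      ∃ e : yhat = φ.Y', φ.s = eqToHom e) ∧
    (∀ (x : C) (f₁ f₂ : x ⟶ yhat),
      MorphismProperty.LeftFractionRel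
        (MorphismProperty.LeftFraction.ofHom W f₁)
        (MorphismProperty.LeftFraction.ofHom W f₂) ↔ f₁ = f₂) := by
  constructor
  · intro x φ
    exact hnf φ.s φ.hs
  · intro x f₁ f₂
    constructor
    · rintro ⟨Z, t₁, t₂, hst, hft, hW⟩
      simp only [MorphismProperty.LeftFraction.ofHom, Category.id_comp] at hst hft hW
      have h1 : 𝟙 yhat ≫ t₁ = t₁ := Category.id_comp t₁
      have h2 : 𝟙 yhat ≫ t₂ = t₂ := Category.id_comp t₂
      rw [h1] at hW
      rw [h1, h2] at hst
      obtain ⟨e, he⟩ := hnf t₁ hW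
      subst e
      rw [eqToHom_refl] at he
      subst hst he
      simpa using hft
    · rintro rfl
      exact MorphismProperty.LeftFractionRel.refl _
end

section
/- Let Σ be a left calculus of fractions on a monoidal category C that is closed under tensor product (f, g ∈ Σ implies f ⊗ g ∈ Σ). Then the category of fractions C[Σ⁻¹] carries a canonical monoidal structure, with tensor defined on fractions by (f, u) ⊗ (f', u') = (f ⊗ f', u ⊗ u'), and with this structure it is the localization of C by Σ in the 2-category of monoidal categories and strict monoidal functors. -/
open CategoryTheory MonoidalCategory

set_option linter.unusedSectionVars false
open CategoryTheory MonoidalCategory CategoryTheory.Localization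

namespace Stmt16

variable {C : Type} [Category.{0} C] [MonoidalCategory C]

/-- tensoring on the left, with `tensorHom`. -/
@[simps]
def tL (a : C) : C ⥤ C where
  obj x := a ⊗ x
  map f := 𝟙 a ⊗ₘ f
  map_id x := id_tensorHom_id a x
  map_comp f g := by rw [tensorHom_comp_tensorHom, Category.comp_id]

/-- tensoring on the right, with `tensorHom`. -/
@[simps]
def tR (b : C) : C ⥤ C where
  obj x := x ⊗ b
  map f := f ⊗ₘ 𝟙 b
  map_id x := id_tensorHom_id x b
  map_comp f g := by rw [tensorHom_comp_tensorHom, Category.comp_id]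

variable (W : MorphismProperty C) [W.HasLeftCalculusOfFractions]
variable (hclosed : ∀ ⦃x x' y y' : C⦄ (f : x ⟶ x') (g : y ⟶ y'), W f → W g →
      W (MonoidalCategory.tensorHom f g))

/-- underlying object of an object of the localization -/
def ob (X : W.Localization) : C := X.as.obj

lemma Q_ob (X : W.Localization) : W.Q.obj (ob W X) = X := rfl

variable {W}

/-- left tensoring on the localization -/
noncomputable def QL (a : C) : W.Localization ⥤ W.Localization :=
  Construction.lift (tL a ⋙ W.Q) (fun _ _ f hf =>
    W.Q_inverts _ (hclosed (𝟙 a) f (W.id_mem a) hf))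

/-- right tensoring on the localization -/
noncomputable def QR (b : C) : W.Localization ⥤ W.Localization :=
  Construction.lift (tR b ⋙ W.Q) (fun _ _ f hf =>
    W.Q_inverts _ (hclosed f (𝟙 b) hf (W.id_mem b)))

lemma QL_obj (a : C) (X : W.Localization) :
    (QL hclosed a).obj X = W.Q.obj (a ⊗ ob W X) := rfl

lemma QR_obj (b : C) (X : W.Localization) :
    (QR hclosed b).obj X = W.Q.obj (ob W X ⊗ b) := rfl

lemma QL_map (a : C) {x y : C} (f : x ⟶ y) :
    (QL hclosed a).map (W.Q.map f) = W.Q.map (𝟙 a ⊗ₘ f) := by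
  have h := Functor.congr_hom
    (Construction.fac (tL a ⋙ W.Q) (fun _ _ f hf =>
      W.Q_inverts _ (hclosed (𝟙 a) f (W.id_mem a) hf))) f
  erw [eqToHom_refl, eqToHom_refl, Category.id_comp, Category.comp_id] at h
  exact h

lemma QR_map (b : C) {x y : C} (f : x ⟶ y) :
    (QR hclosed b).map (W.Q.map f) = W.Q.map (f ⊗ₘ 𝟙 b) := by
  have h := Functor.congr_hom
    (Construction.fac (tR b ⋙ W.Q) (fun _ _ f hf =>
      W.Q_inverts _ (hclosed f (𝟙 b) hf (W.id_mem b)))) f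
  erw [eqToHom_refl, eqToHom_refl, Category.id_comp, Category.comp_id] at h
  exact h

/-- naturality extension helper -/
lemma natExt {F₁ F₂ : W.Localization ⥤ W.Localization}
    (app : ∀ x : C, F₁.obj (W.Q.obj x) ⟶ F₂.obj (W.Q.obj x))
    (nat : ∀ {x y : C} (g : x ⟶ y),
      F₁.map (W.Q.map g) ≫ app y = app x ≫ F₂.map (W.Q.map g))
    {X Y : W.Localization} (f : X ⟶ Y) :
    F₁.map f ≫ app (ob W Y) = app (ob W X) ≫ F₂.map f := by
  let τ : W.Q ⋙ F₁ ⟶ W.Q ⋙ F₂ :=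
    { app := app, naturality := fun _ _ g => nat g }
  have h := (Construction.natTransExtension τ).naturality f
  have e1 : (Construction.natTransExtension τ).app X = app (ob W X) :=
    Construction.NatTransExtension.app_eq τ (ob W X)
  have e2 : (Construction.natTransExtension τ).app Y = app (ob W Y) :=
    Construction.NatTransExtension.app_eq τ (ob W Y)
  rw [e1, e2] at h
  exact h


lemma interchange_Q {x x' : C} (f₀ : x ⟶ x') {Y Y' : W.Localization} (g : Y ⟶ Y') :
    (QR hclosed (ob W Y)).map (W.Q.map f₀) ≫ (QL hclosed x').map g =
      (QL hclosed x).map g ≫ (QR hclosed (ob W Y')).map (W.Q.map f₀) := by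
  rw [QR_map, QR_map]
  exact (natExt (F₁ := QL hclosed x) (F₂ := QL hclosed x')
    (fun y => W.Q.map (f₀ ⊗ₘ 𝟙 y))
    (fun {y y'} g₀ => by
      erw [QL_map, QL_map, ← W.Q.map_comp, ← W.Q.map_comp,
        id_tensor_comp_tensor_id]
      exact congrArg W.Q.map (tensor_id_comp_id_tensor g₀ f₀).symm) g).symm

lemma interchange {X X' Y Y' : W.Localization} (f : X ⟶ X') (g : Y ⟶ Y') :
    (QR hclosed (ob W Y)).map f ≫ (QL hclosed (ob W X')).map g =
      (QL hclosed (ob W X)).map g ≫ (QR hclosed (ob W Y')).map f := by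
  let P : MorphismProperty W.Localization := fun X X' f =>
    ∀ ⦃Y Y' : W.Localization⦄ (g : Y ⟶ Y'),
      (QR hclosed (ob W Y)).map f ≫ (QL hclosed (ob W X')).map g =
        (QL hclosed (ob W X)).map g ≫ (QR hclosed (ob W Y')).map f
  have : P.IsStableUnderComposition := by
    constructor
    intro X X' X'' f₁ f₂ h₁ h₂ Y Y' g
    erw [Functor.map_comp, Functor.map_comp, Category.assoc, h₂ g,
      ← Category.assoc, h₁ g, Category.assoc]
    rfl
  have hPtop : P = ⊤ := by
    apply Construction.morphismProperty_eq_top' P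
    · intro x x' f₀ Y Y' g
      exact interchange_Q hclosed f₀ g
    · intro X X' e he Y Y' g
      have h := he g
      erw [← cancel_epi ((QR hclosed (ob W Y)).map e.hom), ← Category.assoc,
        ← (QR hclosed (ob W Y)).map_comp, e.hom_inv_id,
        (QR hclosed (ob W Y)).map_id, Category.id_comp, ← Category.assoc, h,
        Category.assoc, ← (QR hclosed (ob W Y')).map_comp, e.hom_inv_id,
        (QR hclosed (ob W Y')).map_id]
      exact (Category.comp_id _).symm
  have : P f := by rw [hPtop]; trivial
  exact this g


lemma assocN3 (a b : C) {Z Z' : W.Localization} (h : Z ⟶ Z') :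
    (QL hclosed (a ⊗ b)).map h ≫ W.Q.map (α_ a b (ob W Z')).hom =
      W.Q.map (α_ a b (ob W Z)).hom ≫ (QL hclosed a).map ((QL hclosed b).map h) :=
  natExt (F₁ := QL hclosed (a ⊗ b)) (F₂ := QL hclosed b ⋙ QL hclosed a)
    (fun z => W.Q.map (α_ a b z).hom)
    (fun {z z'} g => by
      have h0 := associator_naturality (𝟙 a) (𝟙 b) g
      rw [id_tensorHom_id] at h0
      show (QL hclosed (a ⊗ b)).map (W.Q.map g) ≫ _ =
        _ ≫ (QL hclosed a).map ((QL hclosed b).map (W.Q.map g))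
      erw [QL_map, QL_map, ← W.Q.map_comp, ← W.Q.map_comp]
      exact congrArg W.Q.map h0) h

lemma assocN2 (a c : C) {Y Y' : W.Localization} (g : Y ⟶ Y') :
    (QR hclosed c).map ((QL hclosed a).map g) ≫ W.Q.map (α_ a (ob W Y') c).hom =
      W.Q.map (α_ a (ob W Y) c).hom ≫ (QL hclosed a).map ((QR hclosed c).map g) :=
  natExt (F₁ := QL hclosed a ⋙ QR hclosed c) (F₂ := QR hclosed c ⋙ QL hclosed a)
    (fun y => W.Q.map (α_ a y c).hom)
    (fun {y y'} g₀ => by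
      show (QR hclosed c).map ((QL hclosed a).map (W.Q.map g₀)) ≫ _ =
        _ ≫ (QL hclosed a).map ((QR hclosed c).map (W.Q.map g₀))
      erw [QL_map, QR_map, QR_map, QL_map, ← W.Q.map_comp, ← W.Q.map_comp]
      exact congrArg W.Q.map (associator_naturality (𝟙 a) g₀ (𝟙 c))) g

lemma assocN1 (b c : C) {X X' : W.Localization} (f : X ⟶ X') :
    (QR hclosed c).map ((QR hclosed b).map f) ≫ W.Q.map (α_ (ob W X') b c).hom =
      W.Q.map (α_ (ob W X) b c).hom ≫ (QR hclosed (b ⊗ c)).map f :=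
  natExt (F₁ := QR hclosed b ⋙ QR hclosed c) (F₂ := QR hclosed (b ⊗ c))
    (fun x => W.Q.map (α_ x b c).hom)
    (fun {x x'} g => by
      have h0 := associator_naturality g (𝟙 b) (𝟙 c)
      rw [id_tensorHom_id] at h0
      show (QR hclosed c).map ((QR hclosed b).map (W.Q.map g)) ≫ _ = _ ≫ _
      erw [QR_map, QR_map, ← W.Q.map_comp, ← W.Q.map_comp]
      exact congrArg W.Q.map h0) f

lemma unitL {X Y : W.Localization} (f : X ⟶ Y) :
    (QL hclosed (𝟙_ C)).map f ≫ W.Q.map (λ_ (ob W Y)).hom =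
      W.Q.map (λ_ (ob W X)).hom ≫ f :=
  natExt (F₁ := QL hclosed (𝟙_ C)) (F₂ := 𝟭 _)
    (fun y => W.Q.map (λ_ y).hom)
    (fun {y y'} g => by
      have h0 : (𝟙 (𝟙_ C) ⊗ₘ g) ≫ (λ_ y').hom = (λ_ y).hom ≫ g := by
        rw [id_tensorHom]; exact leftUnitor_naturality g
      show (QL hclosed (𝟙_ C)).map (W.Q.map g) ≫ _ = _ ≫ (𝟭 _).map (W.Q.map g)
      erw [QL_map, Functor.id_map, ← W.Q.map_comp, ← W.Q.map_comp]
      exact congrArg W.Q.map h0) f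

lemma unitR {X Y : W.Localization} (f : X ⟶ Y) :
    (QR hclosed (𝟙_ C)).map f ≫ W.Q.map (ρ_ (ob W Y)).hom =
      W.Q.map (ρ_ (ob W X)).hom ≫ f :=
  natExt (F₁ := QR hclosed (𝟙_ C)) (F₂ := 𝟭 _)
    (fun x => W.Q.map (ρ_ x).hom)
    (fun {x x'} g => by
      have h0 : (g ⊗ₘ 𝟙 (𝟙_ C)) ≫ (ρ_ x').hom = (ρ_ x).hom ≫ g := by
        rw [tensorHom_id]; exact rightUnitor_naturality g
      show (QR hclosed (𝟙_ C)).map (W.Q.map g) ≫ _ = _ ≫ (𝟭 _).map (W.Q.map g)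
      erw [QR_map, Functor.id_map, ← W.Q.map_comp, ← W.Q.map_comp]
      exact congrArg W.Q.map h0) f


lemma assoc_nat {X₁ X₂ X₃ Y₁ Y₂ Y₃ : W.Localization}
    (f₁ : X₁ ⟶ Y₁) (f₂ : X₂ ⟶ Y₂) (f₃ : X₃ ⟶ Y₃) :
    ((QR hclosed (ob W X₃)).map
        ((QR hclosed (ob W X₂)).map f₁ ≫ (QL hclosed (ob W Y₁)).map f₂) ≫
      (QL hclosed (ob W Y₁ ⊗ ob W Y₂)).map f₃) ≫
        W.Q.map (α_ (ob W Y₁) (ob W Y₂) (ob W Y₃)).hom =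
    W.Q.map (α_ (ob W X₁) (ob W X₂) (ob W X₃)).hom ≫
      (QR hclosed (ob W X₂ ⊗ ob W X₃)).map f₁ ≫
        (QL hclosed (ob W Y₁)).map
          ((QR hclosed (ob W X₃)).map f₂ ≫ (QL hclosed (ob W Y₂)).map f₃) := by
  erw [Functor.map_comp, Functor.map_comp, Category.assoc, Category.assoc,
    assocN3 hclosed (ob W Y₁) (ob W Y₂) f₃, ← Category.assoc ((QR hclosed (ob W X₃)).map ((QL hclosed (ob W Y₁)).map f₂)),
    assocN2 hclosed (ob W Y₁) (ob W X₃) f₂, ← Category.assoc, ← Category.assoc,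
    assocN1 hclosed (ob W X₂) (ob W X₃) f₁]
  exact (Category.assoc _ _ _).trans (Category.assoc _ _ _)

attribute [local simp] MonoidalCategory.tensorHom_def

/-- the monoidal structure on the localized category -/
noncomputable def locMon : MonoidalCategory W.Localization where
  tensorObj X Y := W.Q.obj (ob W X ⊗ ob W Y)
  whiskerLeft X _ _ g := (QL hclosed (ob W X)).map g
  whiskerRight f Y := (QR hclosed (ob W Y)).map f
  tensorUnit := W.Q.obj (𝟙_ C)
  associator X Y Z := W.Q.mapIso (α_ (ob W X) (ob W Y) (ob W Z))
  leftUnitor X := W.Q.mapIso (λ_ (ob W X))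
  rightUnitor X := W.Q.mapIso (ρ_ (ob W X))
  tensorHom_def f g := rfl
  id_tensorHom_id X Y := by
    show (QR hclosed (ob W Y)).map (𝟙 X) ≫ (QL hclosed (ob W X)).map (𝟙 Y) = 𝟙 _
    rw [(QR hclosed (ob W Y)).map_id, (QL hclosed (ob W X)).map_id]
    exact Category.id_comp _
  tensorHom_comp_tensorHom {X₁ Y₁ Z₁ X₂ Y₂ Z₂} f₁ f₂ g₁ g₂ := by
    refine Eq.symm ?_
    show (QR hclosed (ob W X₂)).map (f₁ ≫ g₁) ≫ (QL hclosed (ob W Z₁)).map (f₂ ≫ g₂) =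
      ((QR hclosed (ob W X₂)).map f₁ ≫ (QL hclosed (ob W Y₁)).map f₂) ≫
        ((QR hclosed (ob W Y₂)).map g₁ ≫ (QL hclosed (ob W Z₁)).map g₂)
    erw [Functor.map_comp, Functor.map_comp, Category.assoc,
      ← Category.assoc ((QR hclosed (ob W X₂)).map g₁),
      interchange hclosed g₁ f₂]
    exact (whisker_eq _ (Category.assoc _ _ _)).trans (Category.assoc _ _ _).symm
  whiskerLeft_id X Y := (QL hclosed (ob W X)).map_id Y
  id_whiskerRight X Y := (QR hclosed (ob W Y)).map_id X
  associator_naturality {X₁ X₂ X₃ Y₁ Y₂ Y₃} f₁ f₂ f₃ := assoc_nat hclosed f₁ f₂ f₃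
  leftUnitor_naturality f := unitL hclosed f
  rightUnitor_naturality f := unitR hclosed f
  pentagon O X Y Z := by
    show (QR hclosed (ob W Z)).map (W.Q.map (α_ (ob W O) (ob W X) (ob W Y)).hom) ≫
        W.Q.map (α_ (ob W O) (ob W X ⊗ ob W Y) (ob W Z)).hom ≫
        (QL hclosed (ob W O)).map (W.Q.map (α_ (ob W X) (ob W Y) (ob W Z)).hom) =
      W.Q.map (α_ (ob W O ⊗ ob W X) (ob W Y) (ob W Z)).hom ≫
        W.Q.map (α_ (ob W O) (ob W X) (ob W Y ⊗ ob W Z)).hom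
    erw [QR_map, QL_map, ← W.Q.map_comp, ← W.Q.map_comp, ← W.Q.map_comp]
    refine congrArg W.Q.map ?_
    rw [tensorHom_id, id_tensorHom]
    exact MonoidalCategory.pentagon _ _ _ _
  triangle X Y := by
    show W.Q.map (α_ (ob W X) (𝟙_ C) (ob W Y)).hom ≫
        (QL hclosed (ob W X)).map (W.Q.map (λ_ (ob W Y)).hom) =
      (QR hclosed (ob W Y)).map (W.Q.map (ρ_ (ob W X)).hom)
    erw [QL_map, QR_map, ← W.Q.map_comp]
    refine congrArg W.Q.map ?_
    rw [id_tensorHom, tensorHom_id]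
    exact MonoidalCategory.triangle _ _


lemma QL_fac (a : C) : W.Q ⋙ QL hclosed a = tL a ⋙ W.Q := Construction.fac _ _
lemma QR_fac (b : C) : W.Q ⋙ QR hclosed b = tR b ⋙ W.Q := Construction.fac _ _

variable {D : Type} [Category.{0} D] [MonoidalCategory D]

lemma strict_tR (F : C ⥤ D) (htens : ∀ x y : C, F.obj (x ⊗ y) = F.obj x ⊗ F.obj y)
    (hmap : ∀ {x x' y y' : C} (f : x ⟶ x') (g : y ⟶ y'),
      F.map (f ⊗ₘ g) = eqToHom (htens x y) ≫ (F.map f ⊗ₘ F.map g) ≫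
        eqToHom (htens x' y').symm) (b : C) :
    tR b ⋙ F = F ⋙ tR (F.obj b) := by
  refine CategoryTheory.Functor.ext (fun x => htens x b) (fun x y f => ?_)
  show F.map (f ⊗ₘ 𝟙 b) = _
  rw [hmap f (𝟙 b), F.map_id]
  rfl

lemma strict_tL (F : C ⥤ D) (htens : ∀ x y : C, F.obj (x ⊗ y) = F.obj x ⊗ F.obj y)
    (hmap : ∀ {x x' y y' : C} (f : x ⟶ x') (g : y ⟶ y'),
      F.map (f ⊗ₘ g) = eqToHom (htens x y) ≫ (F.map f ⊗ₘ F.map g) ≫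
        eqToHom (htens x' y').symm) (a : C) :
    tL a ⋙ F = F ⋙ tL (F.obj a) := by
  refine CategoryTheory.Functor.ext (fun y => htens a y) (fun x y g => ?_)
  show F.map (𝟙 a ⊗ₘ g) = _
  rw [hmap (𝟙 a) g, F.map_id]
  rfl

lemma liftR (F : C ⥤ D) (hFinv : W.IsInvertedBy F)
    (htens : ∀ x y : C, F.obj (x ⊗ y) = F.obj x ⊗ F.obj y)
    (hmap : ∀ {x x' y y' : C} (f : x ⟶ x') (g : y ⟶ y'),
      F.map (f ⊗ₘ g) = eqToHom (htens x y) ≫ (F.map f ⊗ₘ F.map g) ≫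
        eqToHom (htens x' y').symm) (b : C) :
    QR hclosed b ⋙ Construction.lift F hFinv =
      Construction.lift F hFinv ⋙ tR (F.obj b) := by
  apply Construction.uniq
  rw [← Functor.assoc, QR_fac, Functor.assoc, Construction.fac,
    strict_tR F htens @hmap b, ← Functor.assoc, Construction.fac]

lemma liftL (F : C ⥤ D) (hFinv : W.IsInvertedBy F)
    (htens : ∀ x y : C, F.obj (x ⊗ y) = F.obj x ⊗ F.obj y)
    (hmap : ∀ {x x' y y' : C} (f : x ⟶ x') (g : y ⟶ y'),
      F.map (f ⊗ₘ g) = eqToHom (htens x y) ≫ (F.map f ⊗ₘ F.map g) ≫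
        eqToHom (htens x' y').symm) (a : C) :
    QL hclosed a ⋙ Construction.lift F hFinv =
      Construction.lift F hFinv ⋙ tL (F.obj a) := by
  apply Construction.uniq
  rw [← Functor.assoc, QL_fac, Functor.assoc, Construction.fac,
    strict_tL F htens @hmap a, ← Functor.assoc, Construction.fac]


end Stmt16

/-- A functor between monoidal categories is strict monoidal when it preserves
the unit and the tensor product on the nose. -/
def StrictMonoidal {C : Type*} [Category C] [MonoidalCategory C]
    {D : Type*} [Category D] [MonoidalCategory D] (F : C ⥤ D) : Prop :=
  ∃ (_ : F.obj (𝟙_ C) = 𝟙_ D) (htens : ∀ x y : C, F.obj (x ⊗ y) = F.obj x ⊗ F.obj y),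
    ∀ {x x' y y' : C} (f : x ⟶ x') (g : y ⟶ y'),
      F.map (MonoidalCategory.tensorHom f g) =
        eqToHom (htens x y) ≫ MonoidalCategory.tensorHom (F.map f) (F.map g) ≫
          eqToHom (htens x' y').symm

/-- If `Σ` is a left calculus of fractions on a monoidal category `C`, closed
under tensor product, then: the tensor of left fractions is well defined on
equivalence classes, and the category of fractions `C[Σ⁻¹]` carries a monoidal
structure making the localization functor strict monoidal, and universal among
strict monoidal functors sending `Σ` to isomorphisms. -/
theorem stmt_16 {C : Type} [Category.{0} C] [MonoidalCategory C]
    (W : MorphismProperty C) [W.HasLeftCalculusOfFractions]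
    (hclosed : ∀ ⦃x x' y y' : C⦄ (f : x ⟶ x') (g : y ⟶ y'), W f → W g →
      W (MonoidalCategory.tensorHom f g)) :
    (∀ ⦃x y x' y' : C⦄ (z₁ z₂ : W.LeftFraction x y)
      (z₁' z₂' : W.LeftFraction x' y'),
      MorphismProperty.LeftFractionRel z₁ z₂ →
      MorphismProperty.LeftFractionRel z₁' z₂' →
      MorphismProperty.LeftFractionRel
        (MorphismProperty.LeftFraction.mk
          (MonoidalCategory.tensorHom z₁.f z₁'.f)
          (MonoidalCategory.tensorHom z₁.s z₁'.s) (hclosed _ _ z₁.hs z₁'.hs))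
        (MorphismProperty.LeftFraction.mk
          (MonoidalCategory.tensorHom z₂.f z₂'.f)
          (MonoidalCategory.tensorHom z₂.s z₂'.s) (hclosed _ _ z₂.hs z₂'.hs))) ∧
    ∃ M : MonoidalCategory W.Localization,
      @StrictMonoidal C _ _ W.Localization _ M W.Q ∧
      ∀ (D : Type) (instD : Category.{0} D) (instMD : MonoidalCategory D)
        (F : C ⥤ D), @StrictMonoidal C _ _ D instD instMD F →
        W.IsInvertedBy F →
        ∃! G : W.Localization ⥤ D,
          W.Q ⋙ G = F ∧ @StrictMonoidal W.Localization _ M D instD instMD G := by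
  constructor
  · rintro x y x' y' z₁ z₂ z₁' z₂' ⟨Z, t₁, t₂, hst, hft, ht⟩ ⟨Z', t₁', t₂', hst', hft', ht'⟩
    exact ⟨Z ⊗ Z', t₁ ⊗ₘ t₁', t₂ ⊗ₘ t₂',
      by dsimp; rw [tensorHom_comp_tensorHom, tensorHom_comp_tensorHom, hst, hst'],
      by dsimp; rw [tensorHom_comp_tensorHom, tensorHom_comp_tensorHom, hft, hft'],
      by dsimp; rw [tensorHom_comp_tensorHom]; exact hclosed _ _ ht ht'⟩
  · refine ⟨Stmt16.locMon hclosed, ?_, ?_⟩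
    · refine ⟨rfl, fun x y => rfl, fun {x x' y y'} f g => ?_⟩
      show W.Q.map (f ⊗ₘ g) =
        (Stmt16.QR hclosed (Stmt16.ob W (W.Q.obj y))).map (W.Q.map f) ≫
          (Stmt16.QL hclosed (Stmt16.ob W (W.Q.obj x'))).map (W.Q.map g)
      erw [Stmt16.QR_map, Stmt16.QL_map, ← W.Q.map_comp]
      exact congrArg W.Q.map (tensor_id_comp_id_tensor g f).symm
    · intro D instD instMD F hFs hFinv
      obtain ⟨hunit, htens, hmap⟩ := hFs
      refine ⟨Localization.Construction.lift F hFinv,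
        ⟨Localization.Construction.fac F hFinv, ?_⟩, ?_⟩
      · refine ⟨hunit, fun X Y => htens (Stmt16.ob W X) (Stmt16.ob W Y),
          fun {X X' Y Y'} f g => ?_⟩
        have eR : (Localization.Construction.lift F hFinv).map
            ((Stmt16.QR hclosed (Stmt16.ob W Y)).map f) =
            eqToHom (htens (Stmt16.ob W X) (Stmt16.ob W Y)) ≫
              ((Localization.Construction.lift F hFinv).map f ⊗ₘ
                𝟙 ((Localization.Construction.lift F hFinv).obj Y)) ≫
              eqToHom (htens (Stmt16.ob W X') (Stmt16.ob W Y)).symm :=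
          Functor.congr_hom (Stmt16.liftR hclosed F hFinv htens @hmap (Stmt16.ob W Y)) f
        have eL : (Localization.Construction.lift F hFinv).map
            ((Stmt16.QL hclosed (Stmt16.ob W X')).map g) =
            eqToHom (htens (Stmt16.ob W X') (Stmt16.ob W Y)) ≫
              (𝟙 ((Localization.Construction.lift F hFinv).obj X') ⊗ₘ
                (Localization.Construction.lift F hFinv).map g) ≫
              eqToHom (htens (Stmt16.ob W X') (Stmt16.ob W Y')).symm :=
          Functor.congr_hom (Stmt16.liftL hclosed F hFinv htens @hmap (Stmt16.ob W X')) g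
        erw [show (Localization.Construction.lift F hFinv).map
              (MonoidalCategory.tensorHom
                (self := (Stmt16.locMon hclosed).toMonoidalCategoryStruct) f g)
            = (Localization.Construction.lift F hFinv).map
                ((Stmt16.QR hclosed (Stmt16.ob W Y)).map f) ≫
              (Localization.Construction.lift F hFinv).map
                ((Stmt16.QL hclosed (Stmt16.ob W X')).map g)
          from (Localization.Construction.lift F hFinv).map_comp _ _, eR, eL]
        erw [Category.assoc, Category.assoc, eqToHom_trans_assoc, eqToHom_refl, Category.id_comp]
        erw [tensor_id_comp_id_tensor_assoc ((Localization.Construction.lift F hFinv).map g)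
          ((Localization.Construction.lift F hFinv).map f)]
        rfl
      · rintro G' ⟨hfac, -⟩
        exact Localization.Construction.uniq G' (Localization.Construction.lift F hFinv)
          (by rw [hfac, Localization.Construction.fac])
end

section
/- Consider the category C presented by objects {x, x', y, y'} and generators f : x → x', g : x → y, g' : y → x, h : y → y' with relations f ∘ g' ∘ g = f and h ∘ g ∘ g' = h, and let P̃₁ = {g, g'}. Then the quotient category C/P̃₁ has only identity endomorphisms on each object, while the localization C[P̃₁⁻¹] contains the nonidentity endomorphism g' ∘ g : x → x (which becomes an isomorphism). Hence the quotient and the localization are not equivalent categories. -/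
open CategoryTheory Quiver

/-- The four object generators. -/
inductive V19 : Type
  | x | x' | y | y'

/-- The four morphism generators `f : x → x'`, `g : x → y`, `g' : y → x`,
`h : y → y'`. -/
inductive E19 : V19 → V19 → Type
  | f : E19 .x .x'
  | g : E19 .x .y
  | g' : E19 .y .x
  | h : E19 .y .y'

instance : Quiver.{0} V19 := ⟨E19⟩

/-- The relations `f ∘ g' ∘ g = f` and `h ∘ g ∘ g' = h`. -/
inductive R19 : HomRel (Paths V19)
  | fg : R19 (Hom.toPath E19.g ≫ Hom.toPath E19.g' ≫ Hom.toPath E19.f)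
      (Hom.toPath E19.f)
  | hg : R19 (Hom.toPath E19.g' ≫ Hom.toPath E19.g ≫ Hom.toPath E19.h)
      (Hom.toPath E19.h)

/-- The presented category `C`. -/
abbrev C19 := CategoryTheory.Quotient (R19 : HomRel (Paths V19))

/-- The set `Σ = {g, g'}` of (images in `C` of the) equational generators. -/
def W19 : MorphismProperty C19 := fun _ _ u =>
  HEq u ((CategoryTheory.Quotient.functor (R19 : HomRel (Paths V19))).map
    (Hom.toPath E19.g)) ∨
  HEq u ((CategoryTheory.Quotient.functor (R19 : HomRel (Paths V19))).map
    (Hom.toPath E19.g'))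

/-- The nontrivial endomorphism `g' ∘ g` of `x` in `C`. -/
def gg : (CategoryTheory.Quotient.functor (R19 : HomRel (Paths V19))).obj
      ((Paths.of V19).obj V19.x) ⟶
    (CategoryTheory.Quotient.functor (R19 : HomRel (Paths V19))).obj
      ((Paths.of V19).obj V19.x) :=
  (CategoryTheory.Quotient.functor _).map (Hom.toPath E19.g ≫ Hom.toPath E19.g')


namespace S19

abbrev F0 : Paths V19 ⥤ C19 := Quotient.functor (R19 : HomRel (Paths V19))


-- paths out of x' and y'
lemma path_from_x' {v : V19} (p : Path V19.x' v) : v = V19.x' ∧ HEq p (Path.nil : Path V19.x' V19.x') := by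
  induction p with
  | nil => exact ⟨rfl, HEq.rfl⟩
  | cons q e ih =>
    obtain ⟨rfl, -⟩ := ih
    change E19 _ _ at e; cases e

lemma path_from_y' {v : V19} (p : Path V19.y' v) : v = V19.y' ∧ HEq p (Path.nil : Path V19.y' V19.y') := by
  induction p with
  | nil => exact ⟨rfl, HEq.rfl⟩
  | cons q e ih =>
    obtain ⟨rfl, -⟩ := ih
    change E19 _ _ at e; cases e

-- normal forms: strong induction on length
lemma nf (n : ℕ) :
    (∀ p : Path V19.x V19.x, p.length ≤ n →
      F0.map ((p : (Paths.of V19).obj V19.x ⟶ (Paths.of V19).obj V19.x) ≫ Hom.toPath E19.f) = F0.map (Hom.toPath E19.f)) ∧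
    (∀ p : Path V19.y V19.x, p.length ≤ n →
      F0.map ((p : (Paths.of V19).obj V19.y ⟶ (Paths.of V19).obj V19.x) ≫ Hom.toPath E19.f) = F0.map (Hom.toPath E19.g' ≫ Hom.toPath E19.f)) ∧
    (∀ p : Path V19.y V19.y, p.length ≤ n →
      F0.map ((p : (Paths.of V19).obj V19.y ⟶ (Paths.of V19).obj V19.y) ≫ Hom.toPath E19.h) = F0.map (Hom.toPath E19.h)) ∧
    (∀ p : Path V19.x V19.y, p.length ≤ n →
      F0.map ((p : (Paths.of V19).obj V19.x ⟶ (Paths.of V19).obj V19.y) ≫ Hom.toPath E19.h) = F0.map (Hom.toPath E19.g ≫ Hom.toPath E19.h)) := by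
  induction n with
  | zero =>
    refine ⟨?_, ?_, ?_, ?_⟩ <;> intro p hp
    · cases p with
      | nil => rfl
      | cons q e => simp [Path.length] at hp
    · cases p with
      | cons q e => simp [Path.length] at hp
    · cases p with
      | nil => rfl
      | cons q e => simp [Path.length] at hp
    · cases p with
      | cons q e => simp [Path.length] at hp
  | succ n ih =>
    obtain ⟨ihA, ihB, ihC, ihD⟩ := ih
    have relf : F0.map (Hom.toPath E19.g ≫ Hom.toPath E19.g' ≫ Hom.toPath E19.f) = F0.map (Hom.toPath E19.f) :=
      CategoryTheory.Quotient.sound _ R19.fg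
    have relh : F0.map (Hom.toPath E19.g' ≫ Hom.toPath E19.g ≫ Hom.toPath E19.h) = F0.map (Hom.toPath E19.h) :=
      CategoryTheory.Quotient.sound _ R19.hg
    refine ⟨?_, ?_, ?_, ?_⟩ <;> intro p hp
    · -- p : x ⟶ x
      cases p with
      | nil => rfl
      | cons q e =>
        change E19 _ _ at e; cases e
        -- q : Path x y, e = g'
        cases q with
        | cons r e' =>
          change E19 _ _ at e'; cases e'
          -- r : Path x x
          have hr : r.length ≤ n := by
            simp [Path.length] at hp; omega
          show F0.map (r ≫ (Hom.toPath E19.g ≫ Hom.toPath E19.g' ≫ Hom.toPath E19.f)) = _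
          refine ((F0.map_comp _ _).trans ((congrArg (fun k => F0.map r ≫ k) relf).trans (F0.map_comp _ _).symm)).trans ?_
          exact ihA r hr
    · cases p with
      | cons q e =>
        change E19 _ _ at e; cases e
        cases q with
        | nil => rfl
        | cons r e' =>
          change E19 _ _ at e'; cases e'
          have hr : r.length ≤ n := by
            simp [Path.length] at hp; omega
          show F0.map (r ≫ (Hom.toPath E19.g ≫ Hom.toPath E19.g' ≫ Hom.toPath E19.f)) = _
          refine ((F0.map_comp _ _).trans ((congrArg (fun k => F0.map r ≫ k) relf).trans (F0.map_comp _ _).symm)).trans ?_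
          exact ihB r hr
    · cases p with
      | nil => rfl
      | cons q e =>
        change E19 _ _ at e; cases e
        cases q with
        | cons r e' =>
          change E19 _ _ at e'; cases e'
          have hr : r.length ≤ n := by
            simp [Path.length] at hp; omega
          show F0.map (r ≫ (Hom.toPath E19.g' ≫ Hom.toPath E19.g ≫ Hom.toPath E19.h)) = _
          refine ((F0.map_comp _ _).trans ((congrArg (fun k => F0.map r ≫ k) relh).trans (F0.map_comp _ _).symm)).trans ?_
          exact ihC r hr
    · cases p with
      | cons q e =>
        change E19 _ _ at e; cases e
        cases q with
        | nil => rfl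
        | cons r e' =>
          change E19 _ _ at e'; cases e'
          have hr : r.length ≤ n := by
            simp [Path.length] at hp; omega
          show F0.map (r ≫ (Hom.toPath E19.g' ≫ Hom.toPath E19.g ≫ Hom.toPath E19.h)) = _
          refine ((F0.map_comp _ _).trans ((congrArg (fun k => F0.map r ≫ k) relh).trans (F0.map_comp _ _).symm)).trans ?_
          exact ihD r hr

end S19

namespace S19

-- concrete hom computations
lemma hom_path_xx' (p : Path V19.x V19.x') :
    F0.map (p : (Paths.of V19).obj V19.x ⟶ (Paths.of V19).obj V19.x') = F0.map (Hom.toPath E19.f) := by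
  cases p with
  | cons q e =>
    change E19 _ _ at e; cases e
    exact (nf q.length).1 q le_rfl

lemma hom_path_yx' (p : Path V19.y V19.x') :
    F0.map (p : (Paths.of V19).obj V19.y ⟶ (Paths.of V19).obj V19.x') =
      F0.map (Hom.toPath E19.g' ≫ Hom.toPath E19.f) := by
  cases p with
  | cons q e =>
    change E19 _ _ at e; cases e
    exact (nf q.length).2.1 q le_rfl

lemma hom_path_yy' (p : Path V19.y V19.y') :
    F0.map (p : (Paths.of V19).obj V19.y ⟶ (Paths.of V19).obj V19.y') = F0.map (Hom.toPath E19.h) := by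
  cases p with
  | cons q e =>
    change E19 _ _ at e; cases e
    exact (nf q.length).2.2.1 q le_rfl

lemma hom_path_xy' (p : Path V19.x V19.y') :
    F0.map (p : (Paths.of V19).obj V19.x ⟶ (Paths.of V19).obj V19.y') =
      F0.map (Hom.toPath E19.g ≫ Hom.toPath E19.h) := by
  cases p with
  | cons q e =>
    change E19 _ _ at e; cases e
    exact (nf q.length).2.2.2 q le_rfl

lemma hom_from_x' {ya : V19} (u v : F0.obj ((Paths.of V19).obj V19.x') ⟶ (⟨ya⟩ : C19)) : u = v := by
  obtain ⟨p⟩ := u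
  obtain ⟨q⟩ := v
  obtain ⟨rfl, hp⟩ := path_from_x' (p : Path V19.x' ya)
  obtain ⟨-, hq⟩ := path_from_x' (q : Path V19.x' V19.x')
  have hp' : p = (Path.nil : Path V19.x' V19.x') := eq_of_heq hp
  have hq' : q = (Path.nil : Path V19.x' V19.x') := eq_of_heq hq
  rw [hp', hq']

lemma hom_from_y' {ya : V19} (u v : F0.obj ((Paths.of V19).obj V19.y') ⟶ (⟨ya⟩ : C19)) : u = v := by
  obtain ⟨p⟩ := u
  obtain ⟨q⟩ := v
  obtain ⟨rfl, hp⟩ := path_from_y' (p : Path V19.y' ya)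
  obtain ⟨-, hq⟩ := path_from_y' (q : Path V19.y' V19.y')
  have hp' : p = (Path.nil : Path V19.y' V19.y') := eq_of_heq hp
  have hq' : q = (Path.nil : Path V19.y' V19.y') := eq_of_heq hq
  rw [hp', hq']

lemma subs (xa ya : V19) (hya : ya = V19.x' ∨ ya = V19.y') :
    Subsingleton ((⟨xa⟩ : C19) ⟶ (⟨ya⟩ : C19)) := by
  constructor
  intro u v
  rcases hya with rfl | rfl <;> cases xa
  · obtain ⟨p⟩ := u
    obtain ⟨q⟩ := v
    rw [show Quot.mk _ p = F0.map p from rfl, show Quot.mk _ q = F0.map q from rfl,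
      hom_path_xx' p, hom_path_xx' q]
  · exact hom_from_x' u v
  · obtain ⟨p⟩ := u
    obtain ⟨q⟩ := v
    rw [show Quot.mk _ p = F0.map p from rfl, show Quot.mk _ q = F0.map q from rfl,
      hom_path_yx' p, hom_path_yx' q]
  · exact hom_from_y' u v
  · obtain ⟨p⟩ := u
    obtain ⟨q⟩ := v
    rw [show Quot.mk _ p = F0.map p from rfl, show Quot.mk _ q = F0.map q from rfl,
      hom_path_xy' p, hom_path_xy' q]
  · exact hom_from_x' u v
  · obtain ⟨p⟩ := u
    obtain ⟨q⟩ := v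
    rw [show Quot.mk _ p = F0.map p from rfl, show Quot.mk _ q = F0.map q from rfl,
      hom_path_yy' p, hom_path_yy' q]
  · exact hom_from_y' u v

-- the ℤ-model
def φobj : V19 → Type := fun v => match v with
  | .x => ℤ | .y => ℤ | .x' => PUnit | .y' => PUnit

def φ : Prefunctor V19 (Type) where
  obj := φobj
  map {a b} e := match e with
    | .f => TypeCat.ofHom (show ℤ → PUnit from fun _ => PUnit.unit)
    | .g => TypeCat.ofHom (show ℤ → ℤ from fun n => n + 1)
    | .g' => TypeCat.ofHom (show ℤ → ℤ from fun n => n + 1)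
    | .h => TypeCat.ofHom (show ℤ → PUnit from fun _ => PUnit.unit)

def Gfun : C19 ⥤ Type :=
  CategoryTheory.Quotient.lift _ (Paths.lift φ) (by
    rintro X Y f₁ f₂ (h | h) <;> (ext; rfl))

end S19

namespace S19

lemma gfun_map {a b : V19} (p : Path a b) :
    Gfun.map (F0.map (p : (Paths.of V19).obj a ⟶ (Paths.of V19).obj b)) =
      (Paths.lift φ).map (p : (Paths.of V19).obj a ⟶ (Paths.of V19).obj b) :=
  Quotient.lift_map_functor_map _ _ _ _

lemma ne_xy : F0.map (Hom.toPath E19.g) ≠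
    F0.map (Hom.toPath E19.g ≫ Hom.toPath E19.g' ≫ Hom.toPath E19.g) := by
  intro hcon
  have h1 := congrArg Gfun.map hcon
  rw [gfun_map, gfun_map] at h1
  have h3 : (0:ℤ) + 1 = 0 + 1 + 1 + 1 := congrArg (fun k => TypeCat.Hom.hom k (0:ℤ)) h1
  omega

lemma ne_yx : F0.map (Hom.toPath E19.g') ≠
    F0.map (Hom.toPath E19.g' ≫ Hom.toPath E19.g ≫ Hom.toPath E19.g') := by
  intro hcon
  have h1 := congrArg Gfun.map hcon
  rw [gfun_map, gfun_map] at h1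
  have h3 : (0:ℤ) + 1 = 0 + 1 + 1 + 1 := congrArg (fun k => TypeCat.Hom.hom k (0:ℤ)) h1
  omega

lemma not_sub_xy : ¬ Subsingleton (F0.obj ((Paths.of V19).obj V19.x) ⟶ F0.obj ((Paths.of V19).obj V19.y)) :=
  fun hs => ne_xy (hs.elim _ _)

lemma not_sub_yx : ¬ Subsingleton (F0.obj ((Paths.of V19).obj V19.y) ⟶ F0.obj ((Paths.of V19).obj V19.x)) :=
  fun hs => ne_yx (hs.elim _ _)

lemma disc {X Y : C19} (u : X ⟶ Y)
    (hty : ((X ⟶ Y) = (F0.obj ((Paths.of V19).obj V19.x) ⟶ F0.obj ((Paths.of V19).obj V19.y))) ∨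
      ((X ⟶ Y) = (F0.obj ((Paths.of V19).obj V19.y) ⟶ F0.obj ((Paths.of V19).obj V19.x)))) :
    (X.as = V19.x ∨ X.as = V19.y) ∧ (Y.as = V19.x ∨ Y.as = V19.y) := by
  obtain ⟨xa⟩ := X
  obtain ⟨ya⟩ := Y
  have hya : (ya = V19.x ∨ ya = V19.y) ∨ (ya = V19.x' ∨ ya = V19.y') := by
    cases ya
    exacts [Or.inl (Or.inl rfl), Or.inr (Or.inl rfl), Or.inl (Or.inr rfl), Or.inr (Or.inr rfl)]
  rcases hya with hY | hbad
  · refine ⟨?_, hY⟩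
    have hxa : (xa = V19.x ∨ xa = V19.y) ∨ (xa = V19.x' ∨ xa = V19.y') := by
      cases xa
      exacts [Or.inl (Or.inl rfl), Or.inr (Or.inl rfl), Or.inl (Or.inr rfl), Or.inr (Or.inr rfl)]
    rcases hxa with hX | hbad
    · exact hX
    · exfalso
      obtain ⟨p⟩ := u
      rcases hbad with rfl | rfl
      · obtain ⟨rfl, -⟩ := path_from_x' (p : Path V19.x' ya)
        rcases hY with h | h <;> exact V19.noConfusion h
      · obtain ⟨rfl, -⟩ := path_from_y' (p : Path V19.y' ya)
        rcases hY with h | h <;> exact V19.noConfusion h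
  · exfalso
    have hs := subs xa ya hbad
    rcases hty with h | h
    · exact not_sub_xy (h ▸ hs)
    · exact not_sub_yx (h ▸ hs)

lemma iso_g : IsIso ((Paths.lift φ).map (Hom.toPath E19.g)) := by
  rw [Paths.lift_toPath]
  exact ⟨TypeCat.ofHom (show ℤ → ℤ from fun n => n - 1), by ext n; exact Int.add_sub_cancel n 1,
    by ext n; exact Int.sub_add_cancel n 1⟩

lemma iso_g' : IsIso ((Paths.lift φ).map (Hom.toPath E19.g')) := by
  rw [Paths.lift_toPath]
  exact ⟨TypeCat.ofHom (show ℤ → ℤ from fun n => n - 1), by ext n; exact Int.add_sub_cancel n 1,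
    by ext n; exact Int.sub_add_cancel n 1⟩

lemma iso_lift {a b : V19} (p : Path a b) (hb : b = V19.x ∨ b = V19.y) :
    IsIso ((Paths.lift φ).map (p : (Paths.of V19).obj a ⟶ (Paths.of V19).obj b)) := by
  induction p with
  | nil =>
    show IsIso ((Paths.lift φ).map (𝟙 ((Paths.of V19).obj a)))
    rw [CategoryTheory.Functor.map_id]
    infer_instance
  | cons q e ih =>
    change E19 _ _ at e; cases e with
    | f => rcases hb with h | h <;> exact absurd h (by intro hh; exact V19.noConfusion hh)
    | h => rcases hb with h | h <;> exact absurd h (by intro hh; exact V19.noConfusion hh)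
    | g =>
      rw [show (Path.cons q E19.g : Path a V19.y) =
        @CategoryStruct.comp (Paths V19) _ ((Paths.of V19).obj a) ((Paths.of V19).obj V19.x)
          ((Paths.of V19).obj V19.y) q (Hom.toPath E19.g) from rfl]
      refine (congrArg (fun k => IsIso k) ((Paths.lift φ).map_comp q (Hom.toPath E19.g))).mpr ?_
      haveI := ih (Or.inl rfl)
      haveI := iso_g
      exact IsIso.comp_isIso' (ih (Or.inl rfl)) iso_g
    | g' =>
      rw [show (Path.cons q E19.g' : Path a V19.x) =
        @CategoryStruct.comp (Paths V19) _ ((Paths.of V19).obj a) ((Paths.of V19).obj V19.y)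
          ((Paths.of V19).obj V19.x) q (Hom.toPath E19.g') from rfl]
      refine (congrArg (fun k => IsIso k) ((Paths.lift φ).map_comp q (Hom.toPath E19.g'))).mpr ?_
      haveI := ih (Or.inr rfl)
      haveI := iso_g'
      exact IsIso.comp_isIso' (ih (Or.inr rfl)) iso_g'

lemma inverted : W19.IsInvertedBy Gfun := by
  intro X Y u hu
  have hty := hu.elim (fun h => Or.inl (type_eq_of_heq h)) (fun h => Or.inr (type_eq_of_heq h))
  obtain ⟨-, hY⟩ := disc u hty
  obtain ⟨p, rfl⟩ := F0.map_surjective u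
  rw [gfun_map (a := X.as) (b := Y.as) p]
  exact iso_lift p hY

end S19

namespace S19

lemma gg_ne : W19.Q.map gg ≠ 𝟙 _ := by
  intro hcon
  have hfac := Localization.Construction.fac Gfun inverted
  have h1 := Functor.congr_hom hfac.symm gg
  rw [Functor.comp_map, hcon, CategoryTheory.Functor.map_id] at h1
  have h4 : (0:ℤ) + 1 + 1 = 0 := congrArg (fun k => TypeCat.Hom.hom k (0:ℤ)) h1
  omega

lemma gg_iso : IsIso (W19.Q.map gg) := by
  rw [show W19.Q.map gg = W19.Q.map (F0.map (Hom.toPath E19.g)) ≫ W19.Q.map (F0.map (Hom.toPath E19.g')) from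
    (congrArg W19.Q.map (F0.map_comp _ _)).trans (W19.Q.map_comp _ _)]
  haveI := W19.Q_inverts _ (Or.inl HEq.rfl)
  haveI := W19.Q_inverts _ (Or.inr HEq.rfl)
  exact IsIso.comp_isIso' (W19.Q_inverts _ (Or.inl HEq.rfl)) (W19.Q_inverts _ (Or.inr HEq.rfl))

end S19

namespace S19

inductive M3 : Type
  | a | b | c
  deriving DecidableEq

instance : Preorder M3 where
  le u v := u = v ∨ u = M3.a
  le_refl u := Or.inl rfl
  le_trans u v w h1 h2 := by
    rcases h1 with rfl | rfl
    · exact h2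
    · exact Or.inr rfl

lemma M3.no_le {u v : M3} (h : u ≤ v) (h1 : u ≠ v) (h2 : u ≠ M3.a) : False :=
  h.elim h1 h2

lemma M3.noBA (h : M3.b ≤ M3.a) : False := M3.no_le h (by decide) (by decide)
lemma M3.noBC (h : M3.b ≤ M3.c) : False := M3.no_le h (by decide) (by decide)
lemma M3.noCA (h : M3.c ≤ M3.a) : False := M3.no_le h (by decide) (by decide)
lemma M3.noCB (h : M3.c ≤ M3.b) : False := M3.no_le h (by decide) (by decide)

instance (u v : M3) : Subsingleton (u ⟶ v) :=
  inferInstanceAs (Subsingleton (ULift (PLift (u ≤ v))))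

def ψ : Prefunctor V19 M3 where
  obj v := match v with
    | .x => .a | .y => .a | .x' => .b | .y' => .c
  map {a b} e := match e with
    | .f => homOfLE (Or.inr rfl)
    | .g => homOfLE (Or.inl rfl)
    | .g' => homOfLE (Or.inl rfl)
    | .h => homOfLE (Or.inr rfl)

def Qm : C19 ⥤ M3 :=
  CategoryTheory.Quotient.lift _ (Paths.lift ψ)
    (fun _ _ _ _ _ => Subsingleton.elim _ _)

lemma Qm_maps_to_id : ∀ ⦃X Y : C19⦄ (u : X ⟶ Y), W19 u →
    ∃ e : Qm.obj X = Qm.obj Y, Qm.map u = eqToHom e := by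
  intro X Y u hu
  have hty := hu.elim (fun h => Or.inl (type_eq_of_heq h)) (fun h => Or.inr (type_eq_of_heq h))
  obtain ⟨hX, hY⟩ := disc u hty
  obtain ⟨xa⟩ := X
  obtain ⟨ya⟩ := Y
  have e : Qm.obj ⟨xa⟩ = Qm.obj ⟨ya⟩ := by
    rcases hX with h | h <;> rcases hY with h' | h' <;> (cases h; cases h'; rfl)
  exact ⟨e, Subsingleton.elim _ _⟩

section Universal

variable {E : Type} [Category.{0} E] (G' : C19 ⥤ E)
  (eg : G'.obj (F0.obj ((Paths.of V19).obj V19.x)) = G'.obj (F0.obj ((Paths.of V19).obj V19.y)))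

def Hfun : M3 ⥤ E where
  obj m := match m with
    | .a => G'.obj (F0.obj ((Paths.of V19).obj V19.x))
    | .b => G'.obj (F0.obj ((Paths.of V19).obj V19.x'))
    | .c => G'.obj (F0.obj ((Paths.of V19).obj V19.y'))
  map {u v} φ := match u, v with
    | .a, .a => 𝟙 _
    | .a, .b => G'.map (F0.map (Hom.toPath E19.f))
    | .a, .c => eqToHom eg ≫ G'.map (F0.map (Hom.toPath E19.h))
    | .b, .b => 𝟙 _
    | .c, .c => 𝟙 _
    | .b, .a => (M3.noBA φ.down.down).elim
    | .b, .c => (M3.noBC φ.down.down).elim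
    | .c, .a => (M3.noCA φ.down.down).elim
    | .c, .b => (M3.noCB φ.down.down).elim
  map_id m := by cases m <;> rfl
  map_comp {u v w} φ χ := by
    cases u <;> cases v <;> cases w <;>
      first
        | exact (M3.noBA φ.down.down).elim
        | exact (M3.noBC φ.down.down).elim
        | exact (M3.noCA φ.down.down).elim
        | exact (M3.noCB φ.down.down).elim
        | exact (M3.noBA χ.down.down).elim
        | exact (M3.noBC χ.down.down).elim
        | exact (M3.noCA χ.down.down).elim
        | exact (M3.noCB χ.down.down).elim
        | simp

end Universal

end S19

namespace S19

lemma heq_id_eqToHom {E : Type*} [Category E] {A B : E} (e : A = B) :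
    HEq (𝟙 A) (eqToHom e) := by cases e; rfl

lemma heq_id_eqToHom' {E : Type*} [Category E] {A B : E} (e : B = A) :
    HEq (𝟙 A) (eqToHom e) := by cases e; rfl

lemma heq_eqToHom_comp {E : Type*} [Category E] {A B C : E} (e : A = B) (φ : B ⟶ C) :
    HEq (eqToHom e ≫ φ) φ := by cases e; simp

section Universal

variable {E : Type} [Category.{0} E] (G' : C19 ⥤ E)
  (eg : G'.obj (F0.obj ((Paths.of V19).obj V19.x)) = G'.obj (F0.obj ((Paths.of V19).obj V19.y)))

lemma hfac (hmg : G'.map (F0.map (Hom.toPath E19.g)) = eqToHom eg)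
    (eg' : G'.obj (F0.obj ((Paths.of V19).obj V19.y)) = G'.obj (F0.obj ((Paths.of V19).obj V19.x)))
    (hmg' : G'.map (F0.map (Hom.toPath E19.g')) = eqToHom eg') :
    Qm ⋙ Hfun G' eg = G' := by
  apply CategoryTheory.Quotient.lift_unique'
  apply Paths.ext_functor (h_obj := funext fun v => by
    cases v with
    | x => rfl
    | x' => rfl
    | y' => rfl
    | y => exact eg)
  intro a b e
  rw [conj_eqToHom_iff_heq']
  change E19 _ _ at e; cases e with
  | f => exact HEq.rfl
  | g =>
    show HEq (𝟙 (G'.obj (F0.obj ((Paths.of V19).obj V19.x)))) (G'.map (F0.map (Hom.toPath E19.g)))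
    rw [hmg]
    exact heq_id_eqToHom eg
  | g' =>
    show HEq (𝟙 (G'.obj (F0.obj ((Paths.of V19).obj V19.x)))) (G'.map (F0.map (Hom.toPath E19.g')))
    rw [hmg']
    exact heq_id_eqToHom' eg'
  | h =>
    show HEq (eqToHom eg ≫ G'.map (F0.map (Hom.toPath E19.h)))
      (G'.map (F0.map (Hom.toPath E19.h)))
    exact heq_eqToHom_comp eg _

end Universal

end S19

namespace S19

lemma heq_id {E : Type*} [Category E] {A B : E} (e : A = B) : HEq (𝟙 A) (𝟙 B) := by
  cases e; rfl

lemma H_unique {E : Type} [Category.{0} E] (H₁ H₂ : M3 ⥤ E) (heq : Qm ⋙ H₁ = Qm ⋙ H₂) :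
    H₁ = H₂ := by
  have ha : H₁.obj M3.a = H₂.obj M3.a :=
    Functor.congr_obj heq (F0.obj ((Paths.of V19).obj V19.x))
  have hb : H₁.obj M3.b = H₂.obj M3.b :=
    Functor.congr_obj heq (F0.obj ((Paths.of V19).obj V19.x'))
  have hc : H₁.obj M3.c = H₂.obj M3.c :=
    Functor.congr_obj heq (F0.obj ((Paths.of V19).obj V19.y'))
  apply Functor.hext
  · intro m
    cases m
    exacts [ha, hb, hc]
  · intro u v φ
    cases u <;> cases v
    · -- a a
      rw [Subsingleton.elim φ (𝟙 M3.a), CategoryTheory.Functor.map_id,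
        CategoryTheory.Functor.map_id]
      exact heq_id ha
    · -- a b
      rw [Subsingleton.elim φ (Qm.map (F0.map (Hom.toPath E19.f)))]
      have hcong := Functor.congr_hom heq (F0.map (Hom.toPath E19.f))
      rw [conj_eqToHom_iff_heq'] at hcong
      exact hcong
    · -- a c
      rw [Subsingleton.elim φ (Qm.map (F0.map (Hom.toPath E19.h)))]
      have hcong := Functor.congr_hom heq (F0.map (Hom.toPath E19.h))
      rw [conj_eqToHom_iff_heq'] at hcong
      exact hcong
    · exact (M3.noBA φ.down.down).elim
    · rw [Subsingleton.elim φ (𝟙 M3.b), CategoryTheory.Functor.map_id,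
        CategoryTheory.Functor.map_id]
      exact heq_id hb
    · exact (M3.noBC φ.down.down).elim
    · exact (M3.noCA φ.down.down).elim
    · exact (M3.noCB φ.down.down).elim
    · rw [Subsingleton.elim φ (𝟙 M3.c), CategoryTheory.Functor.map_id,
        CategoryTheory.Functor.map_id]
      exact heq_id hc

lemma isQuotient_Qm : IsQuotient W19 Qm := by
  constructor
  · exact Qm_maps_to_id
  · intro E instE G' hG'
    obtain ⟨eg, hmg⟩ :=
      hG' ((CategoryTheory.Quotient.functor (R19 : HomRel (Paths V19))).map (Hom.toPath E19.g))
        (Or.inl HEq.rfl)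
    obtain ⟨eg', hmg'⟩ :=
      hG' ((CategoryTheory.Quotient.functor (R19 : HomRel (Paths V19))).map (Hom.toPath E19.g'))
        (Or.inr HEq.rfl)
    refine ⟨Hfun G' eg, hfac G' eg hmg eg' hmg', ?_⟩
    intro H' hH'
    exact H_unique H' (Hfun G' eg) (hH'.trans (hfac G' eg hmg eg' hmg').symm)

lemma quotient_endo_id {D : Type} [Category.{0} D] (Q : C19 ⥤ D) (hQ : IsQuotient W19 Q) :
    ∀ (d : D) (e : d ⟶ d), e = 𝟙 d := by
  obtain ⟨H, hH, -⟩ := hQ.universal Qm isQuotient_Qm.maps_to_id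
  obtain ⟨K, hK, -⟩ := isQuotient_Qm.universal Q hQ.maps_to_id
  obtain ⟨L, -, hLuniq⟩ := hQ.universal Q hQ.maps_to_id
  have h1 : H ⋙ K = L := hLuniq _ (by
    show Q ⋙ (H ⋙ K) = Q
    rw [← Functor.assoc, hH, hK])
  have h2 : 𝟭 D = L := hLuniq _ (Functor.comp_id Q)
  have hHK : H ⋙ K = 𝟭 D := h1.trans h2.symm
  intro d e
  have h3 := Functor.congr_hom hHK e
  rw [Functor.comp_map, Subsingleton.elim (H.map e) (𝟙 (H.obj d)),
    CategoryTheory.Functor.map_id] at h3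
  have h4 : eqToHom (Functor.congr_obj hHK d).symm ≫
      𝟙 (K.obj (H.obj d)) ≫ eqToHom (Functor.congr_obj hHK d) = e := by
    rw [h3]
    simp
  rw [← h4]
  simp

end S19

/-- For the classical counterexample `x' ← x ⇄ y → y'` with relations
`f ∘ g' ∘ g = f` and `h ∘ g ∘ g' = h`, and `Σ = {g, g'}`: every quotient
`C/Σ` has only identity endomorphisms on (images of) objects, while in the
localization `C[Σ⁻¹]` the endomorphism `g' ∘ g` of `x` becomes an isomorphism
but is not an identity; consequently the quotient and the localization are
not equivalent categories. -/
theorem stmt_19 :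
    (∀ (D : Type) (_ : Category.{0} D) (Q : C19 ⥤ D), IsQuotient W19 Q →
      ∀ (c : C19) (e : Q.obj c ⟶ Q.obj c), e = 𝟙 (Q.obj c)) ∧
    (W19.Q.map gg ≠ 𝟙 _ ∧ IsIso (W19.Q.map gg)) ∧
    (∀ (D : Type) (_ : Category.{0} D) (Q : C19 ⥤ D), IsQuotient W19 Q →
      IsEmpty (W19.Localization ≌ D)) := by
  refine ⟨?_, ⟨S19.gg_ne, S19.gg_iso⟩, ?_⟩
  · intro D instD Q hQ c e
    exact S19.quotient_endo_id Q hQ _ e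
  · intro D instD Q hQ
    constructor
    intro ε
    have h1 : ε.functor.map (W19.Q.map gg) = 𝟙 _ := S19.quotient_endo_id Q hQ _ _
    have h2 : W19.Q.map gg = 𝟙 _ :=
      ε.functor.map_injective (h1.trans (ε.functor.map_id _).symm)
    exact S19.gg_ne h2
end
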